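/- Under the same setting as follows: X ⊆ ℝ^n, Y ⊆ ℝ^m nonempty compact convex with Y of diameter at most D_y; p, q proper closed convex with dom p = X, dom q = Y; h differentiable with L-Lipschitz gradient on X×Y and h(x,·) concave for each x ∈ X; H(x,y) = h(x,y)+p(x)−q(y); ε > 0, ε̂₀ > 0, ε̂_k = ε̂₀/(k+1), x⁰ = x̂⁰ ∈ X, ŷ⁰ ∈ Y, h_k(x,y) = h(x,y) − ε‖y−ŷ⁰‖²/(4D_y) + L‖x−x^k‖², and (x^{k+1}, y^{k+1}) ∈ X×Y an ε̂_k-primal-dual stationary point of min_x max_y {h_k(x,y)+p(x)−q(y)} for each 0 ≤ k ≤ K. Then sup_{y∈Y} H(x^{K+1}, y) ≤ sup_{y∈Y} H(x̂⁰, y) + εD_y/4 + 2ε̂₀²(L^{-1} + 4D_y²L·ε^{-2}). -/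

import Mathlib

/-!
Let `ψ(x) = sup_{y ∈ Y} (H(x, y) - ε‖y - ŷ⁰‖² / (4 D_y))`, which is within `ε D_y / 4` of
`sup_y H(x, y)`. With `e_k = ε̂₀ / (k + 1)`, approximate stationarity in `y` of the strongly
concave inner problem makes `y^{k+1}` an `e_k² D_y / ε`-maximiser of the regularised objective at
`x^{k+1}`, and approximate stationarity in `x`, where the proximal term `L‖x - x^k‖²` outweighs
the curvature of `h`, gives a descent from `x^k` to `x^{k+1}` up to `e_k² / (4L)`. Hence
`ψ(x^{k+1}) ≤ ψ(x^k) + e_k² (D_y / ε + 1 / (4L))`, and `∑ 1 / (k + 1)² ≤ 2` finishes the proof.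
-/

open Set RealInnerProductSpace

theorem mul_sub_mul_sq_le {c : ℝ} (hc : 0 < c) (e r : ℝ) : e * r - c * r ^ 2 ≤ e ^ 2 / (4 * c) := by
  rw [le_div_iff₀ (by positivity)]
  nlinarith [sq_nonneg (2 * c * r - e)]

section Gradient

variable {E : Type*} [NormedAddCommGroup E] [InnerProductSpace ℝ E] [CompleteSpace E]

theorem ConcaveOn.le_add_inner_of_hasGradientAt {s : Set E} {f : E → ℝ} {g w v : E}
    (hf : ConcaveOn ℝ s f) (hg : HasGradientAt f g w) (hw : w ∈ s) (hv : v ∈ s) :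
    f v ≤ f w + ⟪g, v - w⟫ := by
  have hline : HasDerivAt (f ∘ AffineMap.lineMap (k := ℝ) w v) ⟪g, v - w⟫ 0 := by
    have := (hasGradientAt_iff_hasFDerivAt.mp hg).comp_hasDerivAt_of_eq (0 : ℝ)
      AffineMap.hasDerivAt_lineMap (AffineMap.lineMap_apply_zero w v).symm
    simpa only [InnerProductSpace.toDual_apply_apply] using this
  have hconc : ConcaveOn ℝ (AffineMap.lineMap (k := ℝ) w v ⁻¹' s)
      (f ∘ AffineMap.lineMap (k := ℝ) w v) :=
    hf.comp_affineMap _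
  have := hconc.slope_le_of_hasDerivAt (by simpa using hw) (by simpa using hv) zero_lt_one hline
  simp only [slope_def_field, Function.comp_apply, AffineMap.lineMap_apply_one,
    AffineMap.lineMap_apply_zero, sub_zero, div_one] at this
  linarith

theorem abs_sub_sub_inner_le_of_lipschitz_gradient {s : Set E} (hs : Convex ℝ s) {f : E → ℝ}
    {g : E → E} (hg : ∀ z ∈ s, HasGradientAt f (g z) z) {L : ℝ} (hL : 0 ≤ L)
    (hLip : ∀ z ∈ s, ∀ z' ∈ s, ‖g z - g z'‖ ≤ L * ‖z - z'‖) {x₁ x₂ : E} (h₁ : x₁ ∈ s)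
    (h₂ : x₂ ∈ s) :
    |f x₂ - f x₁ - ⟪g x₁, x₂ - x₁⟫| ≤ L * ‖x₂ - x₁‖ ^ 2 := by
  have hseg : segment ℝ x₁ x₂ ⊆ s := hs.segment_subset h₁ h₂
  have hderiv : ∀ z ∈ segment ℝ x₁ x₂, HasFDerivWithinAt (fun u => f u - ⟪g x₁, u⟫)
      (InnerProductSpace.toDual ℝ E (g z - g x₁)) (segment ℝ x₁ x₂) z := by
    intro z hz
    have := (hasGradientAt_iff_hasFDerivAt.mp (hg z (hseg hz))).sub
      ((InnerProductSpace.toDual ℝ E (g x₁)).hasFDerivAt (x := z))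
    rw [map_sub]
    exact this.hasFDerivWithinAt
  have hbound : ∀ z ∈ segment ℝ x₁ x₂,
      ‖InnerProductSpace.toDual ℝ E (g z - g x₁)‖ ≤ L * ‖x₂ - x₁‖ := by
    intro z hz
    rw [LinearIsometryEquiv.norm_map]
    exact (hLip z (hseg hz) x₁ h₁).trans
      (mul_le_mul_of_nonneg_left (norm_sub_le_of_mem_segment hz) hL)
  have := (convex_segment x₁ x₂).norm_image_sub_le_of_norm_hasFDerivWithin_le hderiv hbound
    (left_mem_segment ℝ x₁ x₂) (right_mem_segment ℝ x₁ x₂)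
  rw [Real.norm_eq_abs] at this
  rw [inner_sub_right, sq, ← mul_assoc]
  convert this using 2
  ring

theorem ConcaveOn.sub_sq_sub_le_of_approx_stationary {s : Set E} {f q : E → ℝ} {g t w y₀ v : E}
    {c e : ℝ} (hc : 0 < c) (hf : ConcaveOn ℝ s f) (hg : HasGradientAt f g w) (hw : w ∈ s)
    (hq : ∀ u ∈ s, q w + ⟪t, u - w⟫ ≤ q u) (he : ‖g - c • (w - y₀) - t‖ ≤ e) (hv : v ∈ s) :
    f v - c / 2 * ‖v - y₀‖ ^ 2 - q v ≤ f w - c / 2 * ‖w - y₀‖ ^ 2 - q w + e ^ 2 / (2 * c) := by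
  have hsup := hf.le_add_inner_of_hasGradientAt hg hw hv
  have hsub := hq v hv
  have hsq : ‖v - y₀‖ ^ 2 = ‖w - y₀‖ ^ 2 + 2 * ⟪w - y₀, v - w⟫ + ‖v - w‖ ^ 2 := by
    rw [← norm_add_sq_real, sub_add_sub_cancel']
  have hres : ⟪g - c • (w - y₀) - t, v - w⟫ ≤ e * ‖v - w‖ :=
    (real_inner_le_norm _ _).trans (mul_le_mul_of_nonneg_right he (norm_nonneg _))
  rw [inner_sub_left, inner_sub_left, real_inner_smul_left] at hres
  have := mul_sub_mul_sq_le (half_pos hc) e ‖v - w‖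
  rw [show 4 * (c / 2) = 2 * c by ring] at this
  linear_combination hsup + hsub + hres + this - c / 2 * hsq

theorem add_le_add_of_approx_prox_stationary {s : Set E} (hs : Convex ℝ s) {f p : E → ℝ}
    {g : E → E} (hg : ∀ z ∈ s, HasGradientAt f (g z) z) {L : ℝ} (hL : 0 < L)
    (hLip : ∀ z ∈ s, ∀ z' ∈ s, ‖g z - g z'‖ ≤ L * ‖z - z'‖) {x₀ x₁ σ : E} {e : ℝ}
    (h₀ : x₀ ∈ s) (h₁ : x₁ ∈ s) (hp : ∀ u ∈ s, p x₁ + ⟪σ, u - x₁⟫ ≤ p u)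
    (he : ‖g x₁ + (2 * L) • (x₁ - x₀) + σ‖ ≤ e) :
    f x₁ + p x₁ ≤ f x₀ + p x₀ + e ^ 2 / (4 * L) := by
  have hdesc := (abs_le.mp
    (abs_sub_sub_inner_le_of_lipschitz_gradient hs hg hL.le hLip h₁ h₀)).1
  have hsub := hp x₀ h₀
  have hres : -(e * ‖x₀ - x₁‖) ≤ ⟪g x₁ + (2 * L) • (x₁ - x₀) + σ, x₀ - x₁⟫ := by
    refine neg_le_of_abs_le ((abs_real_inner_le_norm _ _).trans ?_)
    exact mul_le_mul_of_nonneg_right he (norm_nonneg _)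
  have hd : ⟪x₁ - x₀, x₀ - x₁⟫ = -‖x₀ - x₁‖ ^ 2 := by
    rw [← neg_sub, inner_neg_left, real_inner_self_eq_norm_sq]
  rw [inner_add_left, inner_add_left, real_inner_smul_left, hd] at hres
  -- the proximal term gains `2L‖x₀ - x₁‖²`, twice what the descent lemma loses
  have := mul_sub_mul_sq_le hL e ‖x₀ - x₁‖
  linarith

end Gradient

section SupBounds

variable {α : Type*}

theorem BddAbove.image_of_le {s : Set α} {f g : α → ℝ} (hg : BddAbove (g '' s))
    (hfg : ∀ v ∈ s, f v ≤ g v) : BddAbove (f '' s) := by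
  obtain ⟨M, hM⟩ := hg
  refine ⟨M, ?_⟩
  rintro _ ⟨v, hv, rfl⟩
  exact (hfg v hv).trans (hM (mem_image_of_mem g hv))

theorem csSup_image_le_csSup_image_add {s : Set α} (hs : s.Nonempty) {f g : α → ℝ}
    (hg : BddAbove (g '' s)) {c : ℝ} (hfg : ∀ v ∈ s, f v ≤ g v + c) :
    sSup (f '' s) ≤ sSup (g '' s) + c := by
  refine csSup_le (hs.image f) ?_
  rintro _ ⟨v, hv, rfl⟩
  exact (hfg v hv).trans (add_le_add_left (le_csSup hg (mem_image_of_mem g hv)) c)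

theorem bddAbove_image_sub_of_isCompact [TopologicalSpace α] {s : Set α} (hs : IsCompact s)
    {f q : α → ℝ} (hf : ContinuousOn f s) (hq : LowerSemicontinuousOn q s) :
    BddAbove ((fun v => f v - q v) '' s) := by
  obtain ⟨M, hM⟩ := (hs.image_of_continuousOn hf).bddAbove
  obtain ⟨m, hm⟩ := hq.bddBelow_of_isCompact hs
  refine ⟨M - m, ?_⟩
  rintro _ ⟨v, hv, rfl⟩
  exact sub_le_sub (hM (mem_image_of_mem f hv)) (hm (mem_image_of_mem q hv))

end SupBounds

theorem le_mul_of_sq_add_sq_le_sq_mul_sq {a b L r : ℝ} (ha : 0 ≤ a) (hL : 0 ≤ L) (hr : 0 ≤ r)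
    (h : a ^ 2 + b ^ 2 ≤ L ^ 2 * r ^ 2) : a ≤ L * r :=
  (pow_le_pow_iff_left₀ ha (mul_nonneg hL hr) two_ne_zero).mp (by nlinarith [sq_nonneg b])

theorem le_add_two_mul_sq_mul_of_succ_le {u : ℕ → ℝ} {a C : ℝ} (hC : 0 ≤ C) {N : ℕ}
    (hu : ∀ k < N, u (k + 1) ≤ u k + (a / (k + 1)) ^ 2 * C) : u N ≤ u 0 + 2 * a ^ 2 * C := by
  have hsum : ∑ k ∈ Finset.range N, (((k + 1 : ℕ) : ℝ) ^ 2)⁻¹ ≤ 2 := by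
    rw [Finset.range_eq_Ico, Finset.sum_Ico_add' (fun i : ℕ => ((i : ℝ) ^ 2)⁻¹),
      Finset.Ico_add_one_left_eq_Ioo]
    simpa using sum_Ioo_inv_sq_le (α := ℝ) 0 (N + 1)
  have htel : u N - u 0 ≤ a ^ 2 * C * ∑ k ∈ Finset.range N, (((k + 1 : ℕ) : ℝ) ^ 2)⁻¹ := by
    rw [← Finset.sum_range_sub, Finset.mul_sum]
    refine Finset.sum_le_sum fun k hk => ?_
    have := hu k (Finset.mem_range.mp hk)
    rw [div_pow] at this
    push_cast
    linarith [show a ^ 2 / ((k : ℝ) + 1) ^ 2 * C = a ^ 2 * C * (((k : ℝ) + 1) ^ 2)⁻¹ by ring]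
  nlinarith [mul_le_mul_of_nonneg_left hsum (mul_nonneg (sq_nonneg a) hC)]

theorem sSup_image_regularized_le_of_approx_stationary
    {E F : Type*} [NormedAddCommGroup E] [InnerProductSpace ℝ E] [CompleteSpace E]
    [NormedAddCommGroup F] [InnerProductSpace ℝ F] [CompleteSpace F]
    {X : Set E} {Y : Set F} (hX : Convex ℝ X) (hY : Y.Nonempty)
    {h : E → F → ℝ} {p : E → ℝ} {q : F → ℝ} {L c e : ℝ} (hL : 0 < L) (hc : 0 < c)
    {x₀ x₁ σ : E} {w y₀ τ gw : F} {gx : E → E} (hx₀ : x₀ ∈ X) (hx₁ : x₁ ∈ X) (hw : w ∈ Y)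
    (hgx : ∀ z ∈ X, HasGradientAt (fun z' => h z' w) (gx z) z)
    (hLip : ∀ z ∈ X, ∀ z' ∈ X, ‖gx z - gx z'‖ ≤ L * ‖z - z'‖)
    (hgy : HasGradientAt (h x₁) gw w) (hconc : ConcaveOn ℝ Y (h x₁))
    (hp : ∀ u ∈ X, p x₁ + ⟪σ, u - x₁⟫ ≤ p u) (hq : ∀ v ∈ Y, q w + ⟪τ, v - w⟫ ≤ q v)
    (hσ : ‖gx x₁ + (2 * L) • (x₁ - x₀) + σ‖ ≤ e) (hτ : ‖gw - c • (w - y₀) - τ‖ ≤ e)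
    (hbdd : BddAbove ((fun v => h x₀ v - c / 2 * ‖v - y₀‖ ^ 2 + p x₀ - q v) '' Y)) :
    sSup ((fun v => h x₁ v - c / 2 * ‖v - y₀‖ ^ 2 + p x₁ - q v) '' Y)
      ≤ sSup ((fun v => h x₀ v - c / 2 * ‖v - y₀‖ ^ 2 + p x₀ - q v) '' Y)
        + e ^ 2 * (1 / (2 * c) + 1 / (4 * L)) := by
  have hprimal := add_le_add_of_approx_prox_stationary (f := fun z => h z w) hX hgx hL hLip
    hx₀ hx₁ hp hσ
  have hmax := le_csSup hbdd (mem_image_of_mem _ hw)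
  refine csSup_le (hY.image _) ?_
  rintro _ ⟨v, hv, rfl⟩
  have hdual := hconc.sub_sq_sub_le_of_approx_stationary hc hgy hw hq hτ hv
  dsimp only at hprimal hmax ⊢
  linarith [show e ^ 2 * (1 / (2 * c) + 1 / (4 * L)) = e ^ 2 / (2 * c) + e ^ 2 / (4 * L) by ring]

theorem primal_value_no_increase_general {n m : ℕ}
    (X : Set (EuclideanSpace ℝ (Fin n))) (Y : Set (EuclideanSpace ℝ (Fin m)))
    (Dy : ℝ) (hDy : 0 < Dy)
    (hXcv : Convex ℝ X)
    (hYne : Y.Nonempty) (hYcp : IsCompact Y)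
    (hdY : ∀ u ∈ Y, ∀ v ∈ Y, ‖u - v‖ ≤ Dy)
    (p : EuclideanSpace ℝ (Fin n) → ℝ) (q : EuclideanSpace ℝ (Fin m) → ℝ)
    (hqlsc : LowerSemicontinuousOn q Y)
    (h : EuclideanSpace ℝ (Fin n) → EuclideanSpace ℝ (Fin m) → ℝ)
    (gx : EuclideanSpace ℝ (Fin n) → EuclideanSpace ℝ (Fin m) → EuclideanSpace ℝ (Fin n))
    (gy : EuclideanSpace ℝ (Fin n) → EuclideanSpace ℝ (Fin m) → EuclideanSpace ℝ (Fin m))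
    (L : ℝ) (hL : 0 < L)
    (hgx : ∀ x ∈ X, ∀ y ∈ Y, HasGradientAt (fun x' => h x' y) (gx x y) x)
    (hgy : ∀ x ∈ X, ∀ y ∈ Y, HasGradientAt (fun y' => h x y') (gy x y) y)
    (hLip : ∀ x ∈ X, ∀ y ∈ Y, ∀ x' ∈ X, ∀ y' ∈ Y,
      ‖gx x y - gx x' y'‖ ^ 2 + ‖gy x y - gy x' y'‖ ^ 2
        ≤ L ^ 2 * (‖x - x'‖ ^ 2 + ‖y - y'‖ ^ 2))
    (hconc : ∀ x ∈ X, ConcaveOn ℝ Y (fun y => h x y))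
    (ε εh0 : ℝ) (hε : 0 < ε)
    (xh0 : EuclideanSpace ℝ (Fin n)) (hxh0 : xh0 ∈ X)
    (y0 : EuclideanSpace ℝ (Fin m)) (hy0 : y0 ∈ Y)
    (K : ℕ)
    (x : ℕ → EuclideanSpace ℝ (Fin n)) (y : ℕ → EuclideanSpace ℝ (Fin m))
    (hx0 : x 0 = xh0)
    (hmem : ∀ k, x k ∈ X ∧ y k ∈ Y)
    -- for each 0 ≤ k ≤ K, (x^{k+1}, y^{k+1}) is an ε̂_k-primal-dual stationary point of
    -- min_x max_y {h_k(x,y)+p(x)−q(y)}, h_k(x,y) = h(x,y) − ε‖y−ŷ⁰‖²/(4D_y) + L‖x−x^k‖²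
    (hstat : ∀ k ≤ K, ∃ s t,
      (∀ u ∈ X, p (x (k+1)) + @inner ℝ _ _ s (u - x (k+1)) ≤ p u)
      ∧ (∀ v ∈ Y, q (y (k+1)) + @inner ℝ _ _ t (v - y (k+1)) ≤ q v)
      ∧ ‖gx (x (k+1)) (y (k+1)) + (2 * L) • (x (k+1) - x k) + s‖ ≤ εh0 / (k + 1)
      ∧ ‖gy (x (k+1)) (y (k+1)) - (ε / (2 * Dy)) • (y (k+1) - y0) - t‖ ≤ εh0 / (k + 1)) :
    sSup ((fun y' => h (x (K+1)) y' + p (x (K+1)) - q y') '' Y)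
      ≤ sSup ((fun y' => h xh0 y' + p xh0 - q y') '' Y)
        + ε * Dy / 4 + 2 * εh0 ^ 2 * (L⁻¹ + 4 * Dy ^ 2 * L / ε ^ 2) := by
  set c := ε / (2 * Dy) with hc_def
  have hc : 0 < c := by positivity
  set ψ : ℕ → ℝ := fun k => sSup ((fun v => h (x k) v - c / 2 * ‖v - y0‖ ^ 2 + p (x k) - q v) '' Y)
  have hreg : ∀ v ∈ Y, 0 ≤ c / 2 * ‖v - y0‖ ^ 2 ∧ c / 2 * ‖v - y0‖ ^ 2 ≤ ε * Dy / 4 :=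
    fun v hv => ⟨by positivity, calc
      c / 2 * ‖v - y0‖ ^ 2 ≤ c / 2 * Dy ^ 2 := by gcongr; exact hdY v hv y0 hy0
      _ = ε * Dy / 4 := by rw [hc_def]; field_simp; ring⟩
  have hHbdd : ∀ z ∈ X, BddAbove ((fun v => h z v + p z - q v) '' Y) := fun z hz =>
    bddAbove_image_sub_of_isCompact hYcp (ContinuousOn.add (f := h z)
      (fun v hv => (hgy z hz v hv).differentiableAt.continuousAt.continuousWithinAt)
      continuousOn_const) hqlsc
  have hGbdd : ∀ k, BddAbove ((fun v => h (x k) v - c / 2 * ‖v - y0‖ ^ 2 + p (x k) - q v) '' Y) :=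
    fun k => (hHbdd _ (hmem k).1).image_of_le fun v hv => by linarith [(hreg v hv).1]
  have hLipx : ∀ w ∈ Y, ∀ z ∈ X, ∀ z' ∈ X, ‖gx z w - gx z' w‖ ≤ L * ‖z - z'‖ :=
    fun w hw z hz z' hz' => le_mul_of_sq_add_sq_le_sq_mul_sq (norm_nonneg _) hL.le (norm_nonneg _)
      (by simpa using hLip z hz w hw z' hz' w hw)
  have hstep : ∀ k < K + 1,
      ψ (k + 1) ≤ ψ k + (εh0 / (k + 1)) ^ 2 * (1 / (2 * c) + 1 / (4 * L)) := by
    intro k hk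
    obtain ⟨σ, τ, hp, hq, hσ, hτ⟩ := hstat k (Nat.lt_succ_iff.mp hk)
    obtain ⟨hx₁, hw⟩ := hmem (k + 1)
    exact sSup_image_regularized_le_of_approx_stationary hXcv hYne hL hc (hmem k).1 hx₁ hw
      (fun z hz => hgx z hz _ hw) (hLipx _ hw) (hgy _ hx₁ _ hw) (hconc _ hx₁) hp hq hσ hτ
      (hGbdd k)
  have hψ0 : ψ 0 ≤ sSup ((fun y' => h xh0 y' + p xh0 - q y') '' Y) + 0 :=
    csSup_image_le_csSup_image_add hYne (hHbdd _ hxh0) fun v hv => by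
      rw [← hx0]; linarith [(hreg v hv).1]
  have hC : 1 / (2 * c) + 1 / (4 * L) ≤ L⁻¹ + 4 * Dy ^ 2 * L / ε ^ 2 := by
    rw [hc_def]
    field_simp
    nlinarith [sq_nonneg (ε - 2 * L * Dy), mul_pos hε hL, mul_pos hDy hL]
  calc sSup ((fun y' => h (x (K+1)) y' + p (x (K+1)) - q y') '' Y)
      ≤ ψ (K + 1) + ε * Dy / 4 :=
        csSup_image_le_csSup_image_add hYne (hGbdd _) fun v hv => by linarith [(hreg v hv).2]
    _ ≤ ψ 0 + ε * Dy / 4 + 2 * εh0 ^ 2 * (1 / (2 * c) + 1 / (4 * L)) := by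
        linarith [le_add_two_mul_sq_mul_of_succ_le (by positivity) hstep]
    _ ≤ _ := by gcongr; linarith

/-- The output of the inexact proximal point method (Algorithm 2) does
not increase the primal value `max_y H(·,y)`, `H(x,y) = h(x,y)+p(x)−q(y)`, by more than
`εD_y/4 + 2ε̂₀²(L⁻¹ + 4D_y²L ε⁻²)`. -/
theorem primal_value_no_increase {n m : ℕ}
    (X : Set (EuclideanSpace ℝ (Fin n))) (Y : Set (EuclideanSpace ℝ (Fin m)))
    (Dy : ℝ) (hDy : 0 < Dy)
    (hXne : X.Nonempty) (hXcp : IsCompact X) (hXcv : Convex ℝ X)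
    (hYne : Y.Nonempty) (hYcp : IsCompact Y) (hYcv : Convex ℝ Y)
    (hdY : ∀ u ∈ Y, ∀ v ∈ Y, ‖u - v‖ ≤ Dy)
    (p : EuclideanSpace ℝ (Fin n) → ℝ) (q : EuclideanSpace ℝ (Fin m) → ℝ)
    (hpcvx : ConvexOn ℝ X p) (hplsc : LowerSemicontinuousOn p X)
    (hqcvx : ConvexOn ℝ Y q) (hqlsc : LowerSemicontinuousOn q Y)
    (h : EuclideanSpace ℝ (Fin n) → EuclideanSpace ℝ (Fin m) → ℝ)
    (gx : EuclideanSpace ℝ (Fin n) → EuclideanSpace ℝ (Fin m) → EuclideanSpace ℝ (Fin n))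
    (gy : EuclideanSpace ℝ (Fin n) → EuclideanSpace ℝ (Fin m) → EuclideanSpace ℝ (Fin m))
    (L : ℝ) (hL : 0 < L)
    (hgx : ∀ x ∈ X, ∀ y ∈ Y, HasGradientAt (fun x' => h x' y) (gx x y) x)
    (hgy : ∀ x ∈ X, ∀ y ∈ Y, HasGradientAt (fun y' => h x y') (gy x y) y)
    (hLip : ∀ x ∈ X, ∀ y ∈ Y, ∀ x' ∈ X, ∀ y' ∈ Y,
      ‖gx x y - gx x' y'‖ ^ 2 + ‖gy x y - gy x' y'‖ ^ 2
        ≤ L ^ 2 * (‖x - x'‖ ^ 2 + ‖y - y'‖ ^ 2))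
    (hconc : ∀ x ∈ X, ConcaveOn ℝ Y (fun y => h x y))
    (ε εh0 : ℝ) (hε : 0 < ε) (hεh0 : 0 < εh0)
    (xh0 : EuclideanSpace ℝ (Fin n)) (hxh0 : xh0 ∈ X)
    (y0 : EuclideanSpace ℝ (Fin m)) (hy0 : y0 ∈ Y)
    (K : ℕ)
    (x : ℕ → EuclideanSpace ℝ (Fin n)) (y : ℕ → EuclideanSpace ℝ (Fin m))
    (hx0 : x 0 = xh0)
    (hmem : ∀ k, x k ∈ X ∧ y k ∈ Y)
    -- for each 0 ≤ k ≤ K, (x^{k+1}, y^{k+1}) is an ε̂_k-primal-dual stationary point of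
    -- min_x max_y {h_k(x,y)+p(x)−q(y)}, h_k(x,y) = h(x,y) − ε‖y−ŷ⁰‖²/(4D_y) + L‖x−x^k‖²
    (hstat : ∀ k ≤ K, ∃ s t,
      (∀ u ∈ X, p (x (k+1)) + @inner ℝ _ _ s (u - x (k+1)) ≤ p u)
      ∧ (∀ v ∈ Y, q (y (k+1)) + @inner ℝ _ _ t (v - y (k+1)) ≤ q v)
      ∧ ‖gx (x (k+1)) (y (k+1)) + (2 * L) • (x (k+1) - x k) + s‖ ≤ εh0 / (k + 1)
      ∧ ‖gy (x (k+1)) (y (k+1)) - (ε / (2 * Dy)) • (y (k+1) - y0) - t‖ ≤ εh0 / (k + 1)) :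
    sSup ((fun y' => h (x (K+1)) y' + p (x (K+1)) - q y') '' Y)
      ≤ sSup ((fun y' => h xh0 y' + p xh0 - q y') '' Y)
        + ε * Dy / 4 + 2 * εh0 ^ 2 * (L⁻¹ + 4 * Dy ^ 2 * L / ε ^ 2) :=
  primal_value_no_increase_general X Y Dy hDy hXcv hYne hYcp hdY p q hqlsc h gx gy L hL hgx hgy hLip
    hconc ε εh0 hε xh0 hxh0 y0 hy0 K x y hx0 hmem hstat
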